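/- arXiv:2205.02284 — 2 statements merged into one kernel-verified Lean document; each statement's English description precedes it below -/
import Mathlib

section
/- There exist constants C > 0 and a > 0 (depending only on the dimension d) such that for all t > 0 and all x, y ∈ ℝ^d, |∂_t k_t(x,y)| ≤ C · t^{−d/2−1} · e^{−a|x−y|²/t}. -/
set_option maxHeartbeats 1000000

open MeasureTheory Real

lemma sinh_le_mul_cosh {x : ℝ} (hx : 0 ≤ x) : Real.sinh x ≤ x * Real.cosh x := by
  have hmono : MonotoneOn (fun y => y * Real.cosh y - Real.sinh y) (Set.Ici 0) := by
    apply monotoneOn_of_deriv_nonneg (convex_Ici 0)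
    · exact ((continuous_id.mul Real.continuous_cosh).sub Real.continuous_sinh).continuousOn
    · apply Differentiable.differentiableOn
      exact (differentiable_id.mul Real.differentiable_cosh).sub Real.differentiable_sinh
    · intro y hy
      rw [interior_Ici] at hy
      have hd : HasDerivAt (fun y => y * Real.cosh y - Real.sinh y)
          (1 * Real.cosh y + y * Real.sinh y - Real.cosh y) y :=
        ((hasDerivAt_id y).mul (Real.hasDerivAt_cosh y)).sub (Real.hasDerivAt_sinh y)
      rw [hd.deriv]
      have hy' : (0:ℝ) < y := hy
      have : 0 < Real.sinh y := Real.sinh_pos_iff.2 hy'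
      nlinarith [mul_pos hy' this]
  have h := hmono Set.self_mem_Ici hx hx
  simp only [Real.cosh_zero, Real.sinh_zero, mul_one, zero_mul, sub_zero] at h
  linarith [h]

lemma cube_le_sinh {t : ℝ} (ht : 0 < t) : t^3/2 ≤ Real.sinh (2*t) := by
  have h4 := Real.sum_le_exp_of_nonneg (by positivity : (0:ℝ) ≤ 2*t) 4
  norm_num [Finset.sum_range_succ, Nat.factorial] at h4
  have he : Real.exp (-(2*t)) ≤ 1 := Real.exp_le_one_iff.2 (by linarith)
  rw [Real.sinh_eq]
  nlinarith [h4, he, ht, sq_nonneg t]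

lemma mul_exp_neg_le {u : ℝ} (hu : 0 ≤ u) : u * Real.exp (-u) ≤ Real.exp (-(u/2)) := by
  have h1 : u ≤ Real.exp (u/2) := by
    have h2 : Real.exp (u/2) = Real.exp (u/4) * Real.exp (u/4) := by
      rw [← Real.exp_add]; ring_nf
    have h3 := Real.add_one_le_exp (u/4)
    nlinarith [sq_nonneg (u/4 - 1), Real.exp_pos (u/4)]
  have h3 : Real.exp (-u) = Real.exp (-(u/2)) * Real.exp (-(u/2)) := by
    rw [← Real.exp_add]; ring_nf
  have h5 : u * Real.exp (-(u/2)) ≤ 1 := by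
    have h4 : Real.exp (u/2) * Real.exp (-(u/2)) = 1 := by rw [← Real.exp_add]; simp
    calc u * Real.exp (-(u/2)) ≤ Real.exp (u/2) * Real.exp (-(u/2)) :=
          mul_le_mul_of_nonneg_right h1 (Real.exp_pos _).le
      _ = 1 := h4
  calc u * Real.exp (-u) = (u * Real.exp (-(u/2))) * Real.exp (-(u/2)) := by rw [h3]; ring
    _ ≤ 1 * Real.exp (-(u/2)) := mul_le_mul_of_nonneg_right h5 (Real.exp_pos _).le
    _ = _ := one_mul _

lemma mul_exp_neg_le_one (v : ℝ) : v * Real.exp (-v) ≤ 1 := by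
  have h1 : v ≤ Real.exp v := by nlinarith [Real.add_one_le_exp v]
  have h4 : Real.exp v * Real.exp (-v) = 1 := by rw [← Real.exp_add]; simp
  calc v * Real.exp (-v) ≤ Real.exp v * Real.exp (-v) :=
        mul_le_mul_of_nonneg_right h1 (Real.exp_pos _).le
    _ = 1 := h4

lemma mehler_hasDerivAt (d : ℕ) (S P t : ℝ) (ht : 0 < t) :
    HasDerivAt (fun s : ℝ => Real.sinh (2*s) ^ (-(d:ℝ)/2) *
      Real.exp (-(1/2) * S * (Real.cosh (2*s) / Real.sinh (2*s)) + P / Real.sinh (2*s)))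
      (Real.sinh (2*t) ^ (-(d:ℝ)/2) *
        Real.exp (-(1/2) * S * (Real.cosh (2*t) / Real.sinh (2*t)) + P / Real.sinh (2*t)) *
        (-(d:ℝ) * (Real.cosh (2*t) / Real.sinh (2*t))
          + (S - 2*P*Real.cosh (2*t)) / Real.sinh (2*t)^2)) t := by
  have hstpos : 0 < Real.sinh (2*t) := Real.sinh_pos_iff.2 (by linarith)
  have hst : Real.sinh (2*t) ≠ 0 := ne_of_gt hstpos
  have hsq : Real.cosh (2*t)^2 - Real.sinh (2*t)^2 = 1 := Real.cosh_sq_sub_sinh_sq _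
  have h2 : HasDerivAt (fun s : ℝ => 2*s) 2 t := by
    simpa using (hasDerivAt_id t).const_mul 2
  have hsinh : HasDerivAt (fun s : ℝ => Real.sinh (2*s)) (Real.cosh (2*t) * 2) t := h2.sinh
  have hcosh : HasDerivAt (fun s : ℝ => Real.cosh (2*s)) (Real.sinh (2*t) * 2) t := h2.cosh
  have hpow : HasDerivAt (fun s : ℝ => Real.sinh (2*s) ^ (-(d:ℝ)/2))
      (Real.cosh (2*t) * 2 * (-(d:ℝ)/2) * Real.sinh (2*t) ^ (-(d:ℝ)/2 - 1)) t :=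
    hsinh.rpow_const (Or.inl hst)
  have hdiv : HasDerivAt (fun s : ℝ => Real.cosh (2*s) / Real.sinh (2*s))
      (-2 / Real.sinh (2*t)^2) t := by
    have h := hcosh.div hsinh hst
    refine h.congr_deriv ?_
    field_simp
    linear_combination (-1) * hsq
  have hPdiv : HasDerivAt (fun s : ℝ => P / Real.sinh (2*s))
      (-(2*P*Real.cosh (2*t)) / Real.sinh (2*t)^2) t := by
    have h := (hasDerivAt_const t P).div hsinh hst
    refine h.congr_deriv ?_
    ring
  have hE : HasDerivAt (fun s : ℝ =>
      -(1/2) * S * (Real.cosh (2*s) / Real.sinh (2*s)) + P / Real.sinh (2*s))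
      (-(1/2) * S * (-2 / Real.sinh (2*t)^2) + -(2*P*Real.cosh (2*t)) / Real.sinh (2*t)^2) t :=
    (hdiv.const_mul (-(1/2) * S)).add hPdiv
  have hfull := hpow.mul hE.exp
  refine hfull.congr_deriv ?_
  rw [Real.rpow_sub_one hst]
  field_simp
  ring

/-- The Mehler kernel of the Hermite semigroup on `ℝ^d`:
`k_t(x,y) = (sinh 2t)^{−d/2} exp(−(1/2)(|x|² + |y|²) coth 2t + ⟨x,y⟩ / sinh 2t)`. -/
noncomputable def mehlerKer (d : ℕ) (t : ℝ) (x y : Fin d → ℝ) : ℝ :=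
  (Real.sinh (2*t)) ^ (-(d:ℝ)/2) *
    Real.exp (-(1/2) * ((∑ j, x j ^ 2) + (∑ j, y j ^ 2)) * (Real.cosh (2*t) / Real.sinh (2*t))
      + (∑ j, x j * y j) / Real.sinh (2*t))

theorem mehlerKer_deriv_t_bound (d : ℕ) :
    ∃ C > 0, ∃ a > 0, ∀ t > 0, ∀ x y : Fin d → ℝ,
      |deriv (fun s => mehlerKer d s x y) t| ≤
        C * t ^ (-(d:ℝ)/2 - 1) * Real.exp (-a * (∑ j, (x j - y j)^2) / t) := by
  refine ⟨8*(d:ℝ)+8, by positivity, 1/16, by norm_num, ?_⟩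
  intro t ht x y
  have hstpos : 0 < Real.sinh (2*t) := Real.sinh_pos_iff.2 (by linarith)
  have hct1 : 1 ≤ Real.cosh (2*t) := Real.one_le_cosh _
  have h2t : 2*t ≤ Real.sinh (2*t) := Real.self_le_sinh_iff.2 (by linarith)
  have ht3 : t^3/2 ≤ Real.sinh (2*t) := cube_le_sinh ht
  have hsc : Real.sinh (2*t) ≤ 2*t*Real.cosh (2*t) := sinh_le_mul_cosh (by linarith)
  have hctb : Real.cosh (2*t) ≤ 1 + Real.sinh (2*t) := by
    have h := Real.cosh_sub_sinh (2*t)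
    have he : Real.exp (-(2*t)) ≤ 1 := Real.exp_le_one_iff.2 (by linarith)
    linarith
  have hfun : (fun s => mehlerKer d s x y) = (fun s : ℝ => Real.sinh (2*s) ^ (-(d:ℝ)/2) *
      Real.exp (-(1/2) * ((∑ j, x j ^ 2) + (∑ j, y j ^ 2)) *
        (Real.cosh (2*s) / Real.sinh (2*s)) + (∑ j, x j * y j) / Real.sinh (2*s))) := rfl
  have hderiv : deriv (fun s => mehlerKer d s x y) t
      = Real.sinh (2*t) ^ (-(d:ℝ)/2) *
        Real.exp (-(1/2) * ((∑ j, x j ^ 2) + (∑ j, y j ^ 2)) *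
          (Real.cosh (2*t) / Real.sinh (2*t)) + (∑ j, x j * y j) / Real.sinh (2*t)) *
        (-(d:ℝ) * (Real.cosh (2*t) / Real.sinh (2*t))
          + (((∑ j, x j ^ 2) + (∑ j, y j ^ 2)) - 2*(∑ j, x j * y j)*Real.cosh (2*t))
            / Real.sinh (2*t)^2) := by
    rw [hfun]
    exact (mehler_hasDerivAt d _ _ t ht).deriv
  set st := Real.sinh (2*t) with hst_def
  set ct := Real.cosh (2*t) with hct_def
  set S := (∑ j, x j ^ 2) + (∑ j, y j ^ 2) with hS_def
  set P := ∑ j, x j * y j with hP_def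
  set D := ∑ j, (x j - y j)^2 with hD_def
  set Q := ∑ j, (x j + y j)^2 with hQ_def
  have hD : 0 ≤ D := Finset.sum_nonneg fun j _ => sq_nonneg _
  have hQ : 0 ≤ Q := Finset.sum_nonneg fun j _ => sq_nonneg _
  have hDQ : D + Q = 2*S := by
    rw [hD_def, hQ_def, hS_def, ← Finset.sum_add_distrib, mul_add, Finset.mul_sum,
      Finset.mul_sum, ← Finset.sum_add_distrib]
    exact Finset.sum_congr rfl fun j _ => by ring
  have hQD : Q - D = 4*P := by
    rw [hD_def, hQ_def, hP_def, ← Finset.sum_sub_distrib, Finset.mul_sum]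
    exact Finset.sum_congr rfl fun j _ => by ring
  set u := D*(ct+1)/(4*st) with hu_def
  set v := Q*(ct-1)/(4*st) with hv_def
  have hu : 0 ≤ u := div_nonneg (mul_nonneg hD (by linarith)) (by linarith)
  have hv : 0 ≤ v := div_nonneg (mul_nonneg hQ (by linarith)) (by linarith)
  have hS' : S = (D+Q)/2 := by linarith
  have hP' : P = (Q-D)/4 := by linarith
  have hEeq : -(1/2) * S * (ct/st) + P/st = -(u+v) := by
    rw [hS', hP', hu_def, hv_def]
    field_simp
    ring
  have hMeq : -(d:ℝ) * (ct/st) + (S - 2*P*ct)/st^2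
      = -((d:ℝ) * (ct/st)) + 2*u/st - 2*v/st := by
    rw [hS', hP', hu_def, hv_def]
    field_simp
    ring
  rw [hderiv, hEeq, hMeq, abs_mul, abs_mul,
    abs_of_pos (Real.rpow_pos_of_pos hstpos _), abs_of_pos (Real.exp_pos _)]
  -- bound the absolute value of the multiplier
  have tnn1 : (0:ℝ) ≤ (d:ℝ)*(ct/st) := by positivity
  have tnn2 : (0:ℝ) ≤ 2*u/st := div_nonneg (by linarith) hstpos.le
  have tnn3 : (0:ℝ) ≤ 2*v/st := div_nonneg (by linarith) hstpos.le
  have habsM : |(-((d:ℝ)*(ct/st)) + 2*u/st - 2*v/st)| ≤ (d:ℝ)*(ct/st) + 2*u/st + 2*v/st := by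
    calc |(-((d:ℝ)*(ct/st)) + 2*u/st - 2*v/st)|
        ≤ |(-((d:ℝ)*(ct/st)) + 2*u/st)| + |(-(2*v/st))| := by
          rw [sub_eq_add_neg]; exact abs_add_le _ _
      _ ≤ (|(-((d:ℝ)*(ct/st)))| + |2*u/st|) + |(-(2*v/st))| :=
          add_le_add_left (abs_add_le _ _) _
      _ = (d:ℝ)*(ct/st) + 2*u/st + 2*v/st := by
          rw [abs_neg, abs_neg, abs_of_nonneg tnn1, abs_of_nonneg tnn2, abs_of_nonneg tnn3]
  have hsplit : Real.exp (-(u+v)) = Real.exp (-u) * Real.exp (-v) := by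
    rw [← Real.exp_add]; ring_nf
  have hfront : st^(-(d:ℝ)/2)/st * ((d:ℝ)*ct + 4) ≤ (8*(d:ℝ)+8) * t^(-(d:ℝ)/2-1) := by
    have hdnn : (0:ℝ) ≤ (d:ℝ) := Nat.cast_nonneg d
    have hexpneg : -(d:ℝ)/2 ≤ 0 := by linarith
    have htst : t ≤ st := by linarith
    have h1 : st^(-(d:ℝ)/2)/st ≤ t^(-(d:ℝ)/2-1) := by
      have hb : st^(-(d:ℝ)/2) ≤ t^(-(d:ℝ)/2) :=
        Real.rpow_le_rpow_of_nonpos ht htst hexpneg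
      calc st^(-(d:ℝ)/2)/st ≤ t^(-(d:ℝ)/2)/st := (div_le_div_iff_of_pos_right hstpos).2 hb
        _ ≤ t^(-(d:ℝ)/2)/t := by
            apply div_le_div_of_nonneg_left (Real.rpow_nonneg ht.le _) ht htst
        _ = t^(-(d:ℝ)/2-1) := (Real.rpow_sub_one (ne_of_gt ht) _).symm
    have h2 : (d:ℝ) * st^(-(d:ℝ)/2) ≤ (d:ℝ) * (2 * t^(-(d:ℝ)/2-1)) := by
      rcases Nat.eq_zero_or_pos d with hd0 | hd1
      · simp [hd0]
      · have hd1' : (1:ℝ) ≤ (d:ℝ) := by exact_mod_cast hd1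
        apply mul_le_mul_of_nonneg_left _ hdnn
        have hsplit2 : st^(-(d:ℝ)/2) = st^(-((d:ℝ)-1)/2) * st^(-(1:ℝ)/2) := by
          rw [← Real.rpow_add hstpos]; congr 1; ring
        have hA : st^(-((d:ℝ)-1)/2) ≤ t^(-((d:ℝ)-1)/2) :=
          Real.rpow_le_rpow_of_nonpos ht htst (by linarith)
        have hB : st^(-(1:ℝ)/2) ≤ 2 * t^(-(3:ℝ)/2) := by
          have e1 : st^(-(1:ℝ)/2) ≤ (t^3/2)^(-(1:ℝ)/2) :=
            Real.rpow_le_rpow_of_nonpos (by positivity) ht3 (by norm_num)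
          have e2 : (t^3/2)^(-(1:ℝ)/2) = (t^3)^(-(1:ℝ)/2) * ((2:ℝ)^(-(1:ℝ)/2))⁻¹ := by
            rw [Real.div_rpow (by positivity) (by norm_num : (0:ℝ) ≤ 2), div_eq_mul_inv]
          have e2' : ((2:ℝ)^(-(1:ℝ)/2))⁻¹ = (2:ℝ)^((1:ℝ)/2) := by
            rw [show (-(1:ℝ)/2) = -((1:ℝ)/2) by norm_num,
              Real.rpow_neg (by norm_num : (0:ℝ) ≤ 2), inv_inv]
          have e3 : (t^3)^(-(1:ℝ)/2) = t^(-(3:ℝ)/2) := by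
            rw [← Real.rpow_natCast t 3, ← Real.rpow_mul ht.le]; norm_num
          have e4 : (2:ℝ)^((1:ℝ)/2) ≤ 2 := by
            calc (2:ℝ)^((1:ℝ)/2) ≤ (2:ℝ)^(1:ℝ) :=
                  Real.rpow_le_rpow_of_exponent_le (by norm_num) (by norm_num)
              _ = 2 := Real.rpow_one 2
          calc st^(-(1:ℝ)/2) ≤ (t^3/2)^(-(1:ℝ)/2) := e1
            _ = t^(-(3:ℝ)/2) * (2:ℝ)^((1:ℝ)/2) := by rw [e2, e2', e3]
            _ ≤ t^(-(3:ℝ)/2) * 2 :=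
                mul_le_mul_of_nonneg_left e4 (Real.rpow_nonneg ht.le _)
            _ = 2 * t^(-(3:ℝ)/2) := by ring
        calc st^(-(d:ℝ)/2) = st^(-((d:ℝ)-1)/2) * st^(-(1:ℝ)/2) := hsplit2
          _ ≤ t^(-((d:ℝ)-1)/2) * (2 * t^(-(3:ℝ)/2)) :=
              mul_le_mul hA hB (Real.rpow_nonneg hstpos.le _) (Real.rpow_nonneg ht.le _)
          _ = 2 * (t^(-((d:ℝ)-1)/2) * t^(-(3:ℝ)/2)) := by ring
          _ = 2 * t^(-(d:ℝ)/2-1) := by rw [← Real.rpow_add ht]; congr 1; ring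
    have hX : 0 ≤ t^(-(d:ℝ)/2-1) := Real.rpow_nonneg ht.le _
    have hstep : st^(-(d:ℝ)/2)/st * ((d:ℝ)*ct + 4)
        ≤ st^(-(d:ℝ)/2)/st * ((d:ℝ)*(1+st) + 4) := by
      apply mul_le_mul_of_nonneg_left _ (div_nonneg (Real.rpow_nonneg hstpos.le _) hstpos.le)
      have : (d:ℝ)*ct ≤ (d:ℝ)*(1+st) := mul_le_mul_of_nonneg_left hctb hdnn
      linarith
    have heq2 : st^(-(d:ℝ)/2)/st * ((d:ℝ)*(1+st) + 4)
        = (d:ℝ)*st^(-(d:ℝ)/2) + ((d:ℝ)+4)*(st^(-(d:ℝ)/2)/st) := by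
      field_simp; ring
    calc st^(-(d:ℝ)/2)/st * ((d:ℝ)*ct + 4)
        ≤ st^(-(d:ℝ)/2)/st * ((d:ℝ)*(1+st) + 4) := hstep
      _ = (d:ℝ)*st^(-(d:ℝ)/2) + ((d:ℝ)+4)*(st^(-(d:ℝ)/2)/st) := heq2
      _ ≤ (d:ℝ)*(2*t^(-(d:ℝ)/2-1)) + ((d:ℝ)+4)*t^(-(d:ℝ)/2-1) :=
          add_le_add h2 (mul_le_mul_of_nonneg_left h1 (by linarith))
      _ ≤ (8*(d:ℝ)+8) * t^(-(d:ℝ)/2-1) := by nlinarith [hX, hdnn]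
  have hexpb : Real.exp (-(u/2)) ≤ Real.exp (-(1/16)*D/t) := by
    apply Real.exp_le_exp.2
    have key : D/(16*t) ≤ u/2 := by
      rw [hu_def, show D*(ct+1)/(4*st)/2 = D*(ct+1)/(8*st) by ring,
        div_le_div_iff₀ (by positivity) (by positivity)]
      have hmul : D*st ≤ D*(2*t*ct) := mul_le_mul_of_nonneg_left hsc hD
      nlinarith [mul_nonneg hD ht.le, hmul]
    have heq : -(1/16)*D/t = -(D/(16*t)) := by ring
    rw [heq]
    exact neg_le_neg key
  calc st^(-(d:ℝ)/2) * Real.exp (-(u+v)) * |(-((d:ℝ)*(ct/st)) + 2*u/st - 2*v/st)|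
      ≤ st^(-(d:ℝ)/2) * Real.exp (-(u+v)) * ((d:ℝ)*(ct/st) + 2*u/st + 2*v/st) := by
        apply mul_le_mul_of_nonneg_left habsM
        exact mul_nonneg (Real.rpow_nonneg hstpos.le _) (Real.exp_pos _).le
    _ = (st^(-(d:ℝ)/2)/st) * ((d:ℝ)*ct*(Real.exp (-u)*Real.exp (-v))
          + 2*(u*Real.exp (-u))*Real.exp (-v) + 2*(v*Real.exp (-v))*Real.exp (-u)) := by
        rw [hsplit]; field_simp
    _ ≤ (st^(-(d:ℝ)/2)/st) * (((d:ℝ)*ct + 4) * Real.exp (-(u/2))) := by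
        apply mul_le_mul_of_nonneg_left _ (div_nonneg (Real.rpow_nonneg hstpos.le _) hstpos.le)
        have e1 : Real.exp (-u) ≤ Real.exp (-(u/2)) := Real.exp_le_exp.2 (by linarith)
        have e2 : Real.exp (-v) ≤ 1 := Real.exp_le_one_iff.2 (by linarith)
        have e3 : u*Real.exp (-u) ≤ Real.exp (-(u/2)) := mul_exp_neg_le hu
        have e4 : v*Real.exp (-v) ≤ 1 := mul_exp_neg_le_one v
        have p1 : (d:ℝ)*ct*(Real.exp (-u)*Real.exp (-v)) ≤ (d:ℝ)*ct*Real.exp (-(u/2)) := by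
          apply mul_le_mul_of_nonneg_left _ (by positivity)
          calc Real.exp (-u)*Real.exp (-v) ≤ Real.exp (-(u/2))*1 :=
                mul_le_mul e1 e2 (Real.exp_pos _).le (Real.exp_pos _).le
            _ = Real.exp (-(u/2)) := mul_one _
        have p2 : 2*(u*Real.exp (-u))*Real.exp (-v) ≤ 2*Real.exp (-(u/2)) := by
          have hnn : (0:ℝ) ≤ 2*(u*Real.exp (-u)) :=
            mul_nonneg (by norm_num) (mul_nonneg hu (Real.exp_pos _).le)
          calc 2*(u*Real.exp (-u))*Real.exp (-v) ≤ 2*(u*Real.exp (-u))*1 :=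
                mul_le_mul_of_nonneg_left e2 hnn
            _ = 2*(u*Real.exp (-u)) := mul_one _
            _ ≤ 2*Real.exp (-(u/2)) := by linarith
        have p3 : 2*(v*Real.exp (-v))*Real.exp (-u) ≤ 2*Real.exp (-(u/2)) := by
          calc 2*(v*Real.exp (-v))*Real.exp (-u) ≤ 2*1*Real.exp (-u) := by
                apply mul_le_mul_of_nonneg_right _ (Real.exp_pos _).le
                linarith
            _ = 2*Real.exp (-u) := by ring
            _ ≤ 2*Real.exp (-(u/2)) := by linarith
        calc (d:ℝ)*ct*(Real.exp (-u)*Real.exp (-v)) + 2*(u*Real.exp (-u))*Real.exp (-v)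
              + 2*(v*Real.exp (-v))*Real.exp (-u)
            ≤ (d:ℝ)*ct*Real.exp (-(u/2)) + 2*Real.exp (-(u/2)) + 2*Real.exp (-(u/2)) :=
              add_le_add (add_le_add p1 p2) p3
          _ = ((d:ℝ)*ct + 4) * Real.exp (-(u/2)) := by ring
    _ = (st^(-(d:ℝ)/2)/st * ((d:ℝ)*ct + 4)) * Real.exp (-(u/2)) := by ring
    _ ≤ ((8*(d:ℝ)+8) * t^(-(d:ℝ)/2-1)) * Real.exp (-(1/16)*D/t) := by
        apply mul_le_mul hfront hexpb (Real.exp_pos _).le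
        positivity
    _ = (8*(d:ℝ)+8) * t^(-(d:ℝ)/2-1) * Real.exp (-(1/16)*D/t) := by ring
end

section
/- There exist constants C > 0 and a > 0 (depending only on the dimension d) such that for all t > 0, all x, y ∈ ℝ^d and every coordinate index j ∈ {1, …, d}, |∂_{y_j} ∂_t k_t(x,y)| ≤ C · t^{−d/2−3/2} · e^{−a|x−y|²/t}, and by the symmetry k_t(x,y) = k_t(y,x) the same bound holds for |∂_{x_j} ∂_t k_t(x,y)|. -/
open MeasureTheory Real

lemma sum_update' {d : ℕ} (y : Fin d → ℝ) (j : Fin d) (v : ℝ) (f : Fin d → ℝ → ℝ) :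
    ∑ i, f i (Function.update y j v i) = f j v - f j (y j) + ∑ i, f i (y i) := by
  have key : ∀ w : ℝ, ∑ i, f i (Function.update y j w i)
      = f j w + ∑ i ∈ Finset.univ \ {j}, f i (y i) := by
    intro w
    have h : ∀ i, f i (Function.update y j w i)
        = Function.update (fun k => f k (y k)) j (f j w) i :=
      fun i => Function.apply_update (fun i z => f i z) y j w i
    rw [Finset.sum_congr rfl fun i _ => h i, Finset.sum_update_of_mem (Finset.mem_univ j)]
  have h2 := key (y j)
  rw [Function.update_eq_self] at h2
  rw [key v, h2]; ring


noncomputable def Pf (d : ℕ) (t : ℝ) (x y : Fin d → ℝ) : ℝ :=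
  -(d:ℝ) * (Real.cosh (2*t) / Real.sinh (2*t)) +
    (((∑ j, x j ^ 2) + (∑ j, y j ^ 2)) - 2 * (∑ j, x j * y j) * Real.cosh (2*t)) /
      (Real.sinh (2*t))^2

lemma hasDerivAt_mehler_t (d : ℕ) {t : ℝ} (ht : 0 < t) (x y : Fin d → ℝ) :
    HasDerivAt (fun s => mehlerKer d s x y) (mehlerKer d t x y * Pf d t x y) t := by
  have hs : 0 < Real.sinh (2*t) := Real.sinh_pos_iff.mpr (by linarith)
  have h2t : HasDerivAt (fun s : ℝ => 2*s) 2 t := by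
    simpa using (hasDerivAt_id t).const_mul (2:ℝ)
  have hsinh : HasDerivAt (fun s : ℝ => Real.sinh (2*s)) (Real.cosh (2*t) * 2) t := h2t.sinh
  have hcosh : HasDerivAt (fun s : ℝ => Real.cosh (2*s)) (Real.sinh (2*t) * 2) t := h2t.cosh
  have hpow : HasDerivAt (fun s : ℝ => Real.sinh (2*s) ^ (-(d:ℝ)/2))
      (Real.cosh (2*t) * 2 * (-(d:ℝ)/2) * Real.sinh (2*t) ^ (-(d:ℝ)/2 - 1)) t :=
    hsinh.rpow_const (Or.inl hs.ne')
  have hdiv : HasDerivAt (fun s : ℝ => Real.cosh (2*s) / Real.sinh (2*s))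
      ((Real.sinh (2*t) * 2 * Real.sinh (2*t) - Real.cosh (2*t) * (Real.cosh (2*t) * 2)) /
        (Real.sinh (2*t))^2) t := hcosh.div hsinh hs.ne'
  have hnum : Real.sinh (2*t) * 2 * Real.sinh (2*t) - Real.cosh (2*t) * (Real.cosh (2*t) * 2)
      = -2 := by nlinarith [Real.cosh_sq (2*t)]
  rw [hnum] at hdiv
  have hinv : HasDerivAt (fun s : ℝ => (∑ j, x j * y j) / Real.sinh (2*s))
      ((0 * Real.sinh (2*t) - (∑ j, x j * y j) * (Real.cosh (2*t) * 2)) /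
        (Real.sinh (2*t))^2) t :=
    (hasDerivAt_const t _).div hsinh hs.ne'
  have hE := ((hdiv.const_mul (-(1/2) * ((∑ j, x j ^ 2) + (∑ j, y j ^ 2)))).add hinv)
  have hexp := hE.exp
  have hprod := hpow.mul hexp
  have hval : Real.cosh (2*t) * 2 * (-(d:ℝ)/2) * Real.sinh (2*t) ^ (-(d:ℝ)/2 - 1) *
        Real.exp (-(1/2) * ((∑ j, x j ^ 2) + (∑ j, y j ^ 2)) *
            (Real.cosh (2*t) / Real.sinh (2*t)) + (∑ j, x j * y j) / Real.sinh (2*t)) +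
      Real.sinh (2*t) ^ (-(d:ℝ)/2) *
        (Real.exp (-(1/2) * ((∑ j, x j ^ 2) + (∑ j, y j ^ 2)) *
            (Real.cosh (2*t) / Real.sinh (2*t)) + (∑ j, x j * y j) / Real.sinh (2*t)) *
          (-(1/2) * ((∑ j, x j ^ 2) + (∑ j, y j ^ 2)) *
              ((-2) / (Real.sinh (2*t))^2) +
            (0 * Real.sinh (2*t) - (∑ j, x j * y j) * (Real.cosh (2*t) * 2)) /
              (Real.sinh (2*t))^2))
      = mehlerKer d t x y * Pf d t x y := by
    have hr : Real.sinh (2*t) ^ (-(d:ℝ)/2 - 1)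
        = Real.sinh (2*t) ^ (-(d:ℝ)/2) / Real.sinh (2*t) := by
      rw [Real.rpow_sub hs, Real.rpow_one]
    rw [hr]
    unfold mehlerKer Pf
    field_simp
    ring
  exact hval ▸ hprod

lemma deriv_deriv_eq (d : ℕ) {t : ℝ} (ht : 0 < t) (x y : Fin d → ℝ) (j : Fin d) :
    deriv (fun v => deriv (fun s => mehlerKer d s x (Function.update y j v)) t) (y j)
      = mehlerKer d t x y *
          ((x j - Real.cosh (2*t) * y j) / Real.sinh (2*t) * Pf d t x y
            + (2 * y j - 2 * Real.cosh (2*t) * x j) / Real.sinh (2*t) ^ 2) := by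
  have hs : 0 < Real.sinh (2*t) := Real.sinh_pos_iff.mpr (by linarith)
  set S := Real.sinh (2*t) with hS
  set Cc := Real.cosh (2*t) with hC
  set X := x j with hX
  set Y := y j with hY
  set Qx := ∑ i, x i ^ 2 with hQx
  set Qy := ∑ i, y i ^ 2 with hQy
  set I := ∑ i, x i * y i with hI
  -- inner deriv
  have hfun : (fun v => deriv (fun s => mehlerKer d s x (Function.update y j v)) t)
      = fun v => mehlerKer d t x (Function.update y j v) * Pf d t x (Function.update y j v) :=
    funext fun v => (hasDerivAt_mehler_t d ht x (Function.update y j v)).deriv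
  rw [hfun]
  -- normal form in v
  set α : ℝ := -(1/2) * (Cc / S) with hα
  set β : ℝ := X / S with hβ
  set γ : ℝ := -(1/2) * (Qx + Qy - Y^2) * (Cc / S) + (I - X*Y) / S with hγ
  set b2 : ℝ := 1 / S^2 with hb2
  set b1 : ℝ := -(2*X*Cc) / S^2 with hb1
  set b0 : ℝ := -(d:ℝ) * (Cc / S) + ((Qx + Qy - Y^2) - 2*(I - X*Y)*Cc) / S^2 with hb0
  have hrep : (fun v => mehlerKer d t x (Function.update y j v) * Pf d t x (Function.update y j v))
      = fun v => S ^ (-(d:ℝ)/2) * Real.exp (α*v^2 + β*v + γ) * (b2*v^2 + b1*v + b0) := by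
    funext v
    unfold mehlerKer Pf
    rw [sum_update' y j v (fun i z => z^2), sum_update' y j v (fun i z => x i * z)]
    rw [hα, hβ, hγ, hb2, hb1, hb0, ← hS, ← hC, ← hX, ← hY, ← hQx, ← hQy, ← hI]
    congr 1
    · congr 1
      ring
    · ring
  rw [hrep]
  -- differentiate in v at Y
  have hq : HasDerivAt (fun v : ℝ => α*v^2 + β*v + γ) (α*(2*Y) + β) Y := by
    have h1 := (hasDerivAt_pow 2 Y).const_mul α
    have h2 := (hasDerivAt_id Y).const_mul β
    have h := (h1.add h2).add_const γ
    refine h.congr_deriv ?_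
    simp
  have hb : HasDerivAt (fun v : ℝ => b2*v^2 + b1*v + b0) (b2*(2*Y) + b1) Y := by
    have h1 := (hasDerivAt_pow 2 Y).const_mul b2
    have h2 := (hasDerivAt_id Y).const_mul b1
    have h := (h1.add h2).add_const b0
    refine h.congr_deriv ?_
    simp
  have hfull := ((hq.exp.const_mul (S ^ (-(d:ℝ)/2))).mul hb)
  rw [HasDerivAt.deriv (f := fun v => S ^ (-(d:ℝ)/2) * Real.exp (α*v^2 + β*v + γ) * (b2*v^2 + b1*v + b0)) hfull]
  -- identify values
  have hEeq : α*Y^2 + β*Y + γ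
      = -(1/2) * (Qx + Qy) * (Cc / S) + I / S := by
    rw [hα, hβ, hγ]; ring
  rw [hEeq]
  unfold mehlerKer Pf
  rw [← hS, ← hC, ← hQx, ← hQy, ← hI, hα, hβ, hb2, hb1, hb0]
  ring

section helpers
variable {Cc S g u w X Y z P : ℝ}

lemma L_An (h2 : 1 ≤ Cc) (hX2 : (X-Y)^2 ≤ u) (hXY2 : (X+Y)^2 ≤ w) :
    (X - Cc*Y)^2 ≤ ((Cc-1)^2*w + (Cc+1)^2*u)/2 := by
  nlinarith [sq_nonneg ((Cc-1)*(X+Y) + (Cc+1)*(X-Y)),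
    mul_le_mul_of_nonneg_left hXY2 (sq_nonneg (Cc-1)),
    mul_le_mul_of_nonneg_left hX2 (sq_nonneg (Cc+1))]

lemma L_Bn (h2 : 1 ≤ Cc) (hX2 : (X-Y)^2 ≤ u) (hXY2 : (X+Y)^2 ≤ w) :
    (2*Y - 2*Cc*X)^2 ≤ 2*((Cc-1)^2*w + (Cc+1)^2*u) := by
  nlinarith [sq_nonneg ((Cc-1)*(X+Y) - (Cc+1)*(X-Y)),
    mul_le_mul_of_nonneg_left hXY2 (sq_nonneg (Cc-1)),
    mul_le_mul_of_nonneg_left hX2 (sq_nonneg (Cc+1))]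

lemma L_key (hs : 0 < S) (hg : 0 < g) (hgS : 2 ≤ g*S) (h2 : 1 ≤ Cc) (h3 : Cc ≤ S + 1)
    (hu : 0 ≤ u) (hw : 0 ≤ w) :
    ((Cc-1)^2*w + (Cc+1)^2*u)/2 ≤ 4*(1+g)*(S*((Cc+1)*u/8 + (Cc-1)*w/4)) := by
  have e1 : (Cc-1)*((Cc-1)*w) ≤ S*((Cc-1)*w) :=
    mul_le_mul_of_nonneg_right (by linarith) (mul_nonneg (by linarith) hw)
  have e2 : (Cc+1)*((Cc+1)*u) ≤ (S+S*g)*((Cc+1)*u) := by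
    apply mul_le_mul_of_nonneg_right _ (mul_nonneg (by linarith) hu)
    nlinarith [hgS]
  have f1 : 0 ≤ S*((Cc-1)*w) := mul_nonneg hs.le (mul_nonneg (by linarith) hw)
  have f2 : 0 ≤ g*(S*((Cc-1)*w)) := mul_nonneg hg.le f1
  nlinarith [e1, e2, f1, f2]

lemma L_sec_up (hs : 0 < S) (hg : 0 < g) (hgS : 2 ≤ g*S) (h2 : 1 ≤ Cc)
    (hu : 0 ≤ u) (hw : 0 ≤ w) :
    (Cc+1)*u - (Cc-1)*w ≤ 4*g*(S*((Cc+1)*u/8 + (Cc-1)*w/4)) := by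
  nlinarith [mul_nonneg (by linarith : (0:ℝ) ≤ g*S - 2) (mul_nonneg (by linarith : (0:ℝ) ≤ Cc+1) hu),
    mul_nonneg (mul_nonneg hg.le hs.le) (mul_nonneg (by linarith : (0:ℝ) ≤ Cc-1) hw),
    mul_nonneg (by linarith : (0:ℝ) ≤ Cc-1) hw]

lemma L_sec_lo (hs : 0 < S) (hg : 0 < g) (hgS : 2 ≤ g*S) (h2 : 1 ≤ Cc)
    (hu : 0 ≤ u) (hw : 0 ≤ w) :
    -(4*g*(S*((Cc+1)*u/8 + (Cc-1)*w/4))) ≤ (Cc+1)*u - (Cc-1)*w := by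
  nlinarith [mul_nonneg (by linarith : (0:ℝ) ≤ g*S - 2) (mul_nonneg (by linarith : (0:ℝ) ≤ Cc-1) hw),
    mul_nonneg (mul_nonneg hg.le hs.le) (mul_nonneg (by linarith : (0:ℝ) ≤ Cc+1) hu),
    mul_nonneg (by linarith : (0:ℝ) ≤ Cc+1) hu]

lemma L_P2 (d : ℝ) (hd0 : 0 ≤ d) (hg : 0 < g) (hz : 0 ≤ z)
    (hP1 : P ≤ d*(1+g) + 2*z*g) (hP2 : -(d*(1+g) + 2*z*g) ≤ P) :
    P^2 ≤ 2*d^2*(1+g)^2 + 8*z^2*g^2 := by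
  nlinarith [mul_nonneg (by linarith : 0 ≤ d*(1+g) + 2*z*g - P)
      (by linarith : 0 ≤ d*(1+g) + 2*z*g + P),
    sq_nonneg (d*(1+g) - 2*z*g)]

lemma L_g1 (hg : 0 < g) : g ≤ 1 + g^3 := by
  nlinarith [mul_nonneg (sq_nonneg (g-1)) (by linarith : (0:ℝ) ≤ g+1)]

lemma L_g2 (hg : 0 < g) : g^2 ≤ 1 + g^3 := by
  nlinarith [mul_nonneg (sq_nonneg (g-1)) (by linarith : (0:ℝ) ≤ g+1)]

lemma L_zexp (z : ℝ) (hz : 0 ≤ z) : z * Real.exp (-z)^2 ≤ 1 := by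
  have hEz2 : Real.exp (-z)^2 = Real.exp (-(2*z)) := by
    rw [sq, ← Real.exp_add]; ring_nf
  rw [hEz2]
  calc z * Real.exp (-(2*z)) ≤ Real.exp (2*z) * Real.exp (-(2*z)) := by
        apply mul_le_mul_of_nonneg_right _ (Real.exp_nonneg _)
        linarith [Real.add_one_le_exp (2*z)]
    _ = 1 := by rw [← Real.exp_add]; simp

lemma L_z3exp (z : ℝ) (hz : 0 ≤ z) : z^3 * Real.exp (-z)^2 ≤ 4 := by
  have hEz2 : Real.exp (-z)^2 = Real.exp (-(2*z)) := by
    rw [sq, ← Real.exp_add]; ring_nf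
  rw [hEz2]
  have ha : 2*z/3 ≤ Real.exp (2*z/3) := by linarith [Real.add_one_le_exp (2*z/3)]
  have hb : (2*z/3)^3 ≤ (Real.exp (2*z/3))^3 := by
    apply pow_le_pow_left₀ (by positivity) ha
  have hc : (Real.exp (2*z/3))^3 = Real.exp (2*z) := by
    rw [← Real.exp_nat_mul]; congr 1; push_cast; ring
  have hz3 : z^3 ≤ 4 * Real.exp (2*z) := by nlinarith [hb, hc, Real.exp_pos (2*z)]
  calc z^3 * Real.exp (-(2*z)) ≤ (4*Real.exp (2*z)) * Real.exp (-(2*z)) :=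
        mul_le_mul_of_nonneg_right hz3 (Real.exp_nonneg _)
    _ = 4 := by rw [mul_assoc, ← Real.exp_add]; simp

lemma L_final (d g τ E2 : ℝ) (hd0 : 0 ≤ d) (hg : 0 < g) (hτ : 0 < τ) (hτ2 : τ^2 = g^3)
    (hE2 : E2 ≤ 8*(1+g)*(2*d^2*(1+g)^2 + 33*g^2)) :
    E2 ≤ ((12*d+96)*(1+τ))^2 := by
  have hg1 : g ≤ 1 + g^3 := L_g1 hg
  have hg2 : g^2 ≤ 1 + g^3 := L_g2 hg
  have hcube : (1+g)^3 ≤ 7*(1+τ^2) := by rw [hτ2]; nlinarith [hg1, hg2]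
  have hquad : g^2*(1+g) ≤ 2*(1+τ^2) := by rw [hτ2]; nlinarith [hg2]
  have e6 : 16*d^2*(1+g)^3 ≤ 16*d^2*(7*(1+τ^2)) :=
    mul_le_mul_of_nonneg_left hcube (by positivity)
  have e7 : (264:ℝ)*(g^2*(1+g)) ≤ 264*(2*(1+τ^2)) :=
    mul_le_mul_of_nonneg_left hquad (by norm_num)
  nlinarith [hE2, e6, e7, hτ, mul_nonneg hd0 hτ.le, sq_nonneg (d*τ),
    mul_nonneg (mul_nonneg hd0 hd0) hτ.le, mul_nonneg hd0 (sq_nonneg τ)]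

end helpers

section helpers2
variable {Cc S g t u w z : ℝ}

lemma L_gS2 (hg : 0 < g) (hS : 0 < S) (hgS : 2 ≤ g*S) : 4 ≤ g^2*S^2 := by
  nlinarith [hgS, mul_pos hg hS]

lemma L_M2 (A B P zz g : ℝ) (hg : 0 < g) (hzz : 0 ≤ zz)
    (hA2 : A^2 ≤ 4*(1+g)*zz) (hB2 : B^2 ≤ 4*(1+g)*zz*g^2) :
    (A*P+B)^2 ≤ 8*(1+g)*(zz*P^2 + zz*g^2) := by
  nlinarith [sq_nonneg (A*P-B), mul_le_mul_of_nonneg_right hA2 (sq_nonneg P), hB2]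

lemma L_assemble (zz g Ez P M d : ℝ) (hd0 : 0 ≤ d) (hg : 0 < g) (hzz : 0 ≤ zz)
    (k1 : zz*Ez^2 ≤ 1) (k3 : zz^3*Ez^2 ≤ 4)
    (hPb : P^2 ≤ 2*d^2*(1+g)^2 + 8*zz^2*g^2)
    (hM2 : M^2 ≤ 8*(1+g)*(zz*P^2 + zz*g^2)) :
    M^2*Ez^2 ≤ 8*(1+g)*(2*d^2*(1+g)^2 + 33*g^2) := by
  have e1 : (zz*Ez^2)*P^2 ≤ (zz*Ez^2)*(2*d^2*(1+g)^2 + 8*zz^2*g^2) :=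
    mul_le_mul_of_nonneg_left hPb (mul_nonneg hzz (sq_nonneg Ez))
  have e2 : (2*d^2*(1+g)^2) * (zz*Ez^2) ≤ (2*d^2*(1+g)^2) * 1 :=
    mul_le_mul_of_nonneg_left k1 (by positivity)
  have e3 : (8*g^2) * (zz^3*Ez^2) ≤ (8*g^2) * 4 :=
    mul_le_mul_of_nonneg_left k3 (by positivity)
  have e4 : zz*g^2*Ez^2 ≤ g^2 := by nlinarith [mul_le_mul_of_nonneg_left k1 (sq_nonneg g)]
  have e5 : M^2*Ez^2 ≤ (8*(1+g)*(zz*P^2 + zz*g^2))*Ez^2 :=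
    mul_le_mul_of_nonneg_right hM2 (sq_nonneg Ez)
  have e6 : (zz*P^2 + zz*g^2)*Ez^2 ≤ 2*d^2*(1+g)^2 + 33*g^2 := by nlinarith [e1, e2, e3, e4]
  have e7 : (8*(1+g))*((zz*P^2 + zz*g^2)*Ez^2) ≤ (8*(1+g))*(2*d^2*(1+g)^2 + 33*g^2) :=
    mul_le_mul_of_nonneg_left e6 (by positivity)
  nlinarith [e5, e7]

lemma L_sqrt {a b : ℝ} (ha : 0 ≤ a) (hb : 0 ≤ b) (h : a^2 ≤ b^2) : a ≤ b := by
  nlinarith [h, ha, hb]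

lemma L_pu (ht : 0 < t) (h2 : 1 ≤ Cc) (h4 : S ≤ 2*t*Cc) (hu : 0 ≤ u) :
    u*(8*S) ≤ (Cc+1)*u*(16*t) := by
  nlinarith [mul_le_mul_of_nonneg_left h4 hu, mul_nonneg ht.le hu]

end helpers2

set_option maxHeartbeats 1000000 in
lemma absM_bound (d : ℕ) {t S Cc u w X Y : ℝ} (ht : 0 < t)
    (h1 : 2*t ≤ S) (h2 : 1 ≤ Cc) (h3 : Cc ≤ S + 1) (h4 : S ≤ 2*t*Cc)
    (hu : 0 ≤ u) (hw : 0 ≤ w) (hX2 : (X-Y)^2 ≤ u) (hXY2 : (X+Y)^2 ≤ w) :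
    |(X - Cc*Y)/S * (-(d:ℝ)*(Cc/S) + ((Cc+1)*u - (Cc-1)*w)/(2*S^2)) + (2*Y - 2*Cc*X)/S^2|
      * Real.exp (-((Cc+1)*u + (Cc-1)*w)/(4*S))
    ≤ (12*(d:ℝ)+96) * (1 + t ^ (-(3:ℝ)/2)) * Real.exp (-(1/16) * u / t) := by
  have hs : 0 < S := by linarith
  have hd0 : (0:ℝ) ≤ (d:ℝ) := Nat.cast_nonneg d
  set g : ℝ := 1/t with hgd
  clear_value g
  have hg : 0 < g := by rw [hgd]; positivity
  set τ : ℝ := t ^ (-(3:ℝ)/2) with hτd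
  clear_value τ
  have hτ : 0 < τ := by rw [hτd]; exact Real.rpow_pos_of_pos ht _
  have hτ2 : τ^2 = g^3 := by
    rw [hτd, sq, ← Real.rpow_add ht]
    norm_num
    rw [hgd]
    field_simp
  set p : ℝ := (Cc+1)*u/(8*S) with hpd
  set q : ℝ := (Cc-1)*w/(4*S) with hqd
  clear_value p q
  have hp : 0 ≤ p := by rw [hpd]; positivity
  have hq0 : 0 ≤ q := by
    rw [hqd]
    have : 0 ≤ (Cc-1)*w := mul_nonneg (by linarith) hw
    positivity
  set z : ℝ := p + q with hzd
  clear_value z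
  have hz : 0 ≤ z := by rw [hzd]; linarith
  set Ez : ℝ := Real.exp (-z) with hEzd
  clear_value Ez
  have hEz : 0 < Ez := by rw [hEzd]; exact Real.exp_pos _
  have hgS : 2 ≤ g*S := by
    rw [hgd, div_mul_eq_mul_div, le_div_iff₀ ht]; linarith
  have hzS2 : z*S^2 = S*((Cc+1)*u/8 + (Cc-1)*w/4) := by
    rw [hzd, hpd, hqd]; field_simp
  set A : ℝ := (X - Cc*Y)/S with hAd
  set B : ℝ := (2*Y - 2*Cc*X)/S^2 with hBd
  set P : ℝ := -(d:ℝ)*(Cc/S) + ((Cc+1)*u - (Cc-1)*w)/(2*S^2) with hPd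
  clear_value A B P
  have hA2 : A^2 ≤ 4*(1+g)*z := by
    rw [hAd, div_pow, div_le_iff₀ (by positivity)]
    have := (L_An h2 hX2 hXY2).trans (L_key hs hg hgS h2 h3 hu hw)
    have hzS2' : 4*(1+g)*z*S^2 = 4*(1+g)*(S*((Cc+1)*u/8 + (Cc-1)*w/4)) := by
      rw [← hzS2]; ring
    linarith [this, hzS2'.le, hzS2'.ge]
  have hB2 : B^2 ≤ 4*(1+g)*z*g^2 := by
    rw [hBd, div_pow, div_le_iff₀ (by positivity)]
    have c1 := (L_Bn h2 hX2 hXY2)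
    have c2 := L_key hs hg hgS h2 h3 hu hw
    have h44 : 4 ≤ g^2*S^2 := L_gS2 hg hs hgS
    have hnn : 0 ≤ 4*(1+g)*z*S^2 := by positivity
    have hmul : (4*(1+g)*z*S^2)*4 ≤ (4*(1+g)*z*S^2)*(g^2*S^2) :=
      mul_le_mul_of_nonneg_left h44 hnn
    have hrw : (4*(1+g)*z*S^2)*(g^2*S^2) = 4*(1+g)*z*g^2*(S^2)^2 := by ring
    have hzS2' : 4*(1+g)*z*S^2 = 4*(1+g)*(S*((Cc+1)*u/8 + (Cc-1)*w/4)) := by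
      rw [← hzS2]; ring
    linarith [c1, c2, hzS2'.le, hzS2'.ge, hmul, hrw.le, hrw.ge]
  have hPb : P^2 ≤ 2*(d:ℝ)^2*(1+g)^2 + 8*z^2*g^2 := by
    have hCS : Cc/S ≤ 1+g := by
      rw [div_le_iff₀ hs]
      have : (1+g)*S = S + g*S := by ring
      linarith [hgS, this.le, this.ge]
    have hCS0 : 0 ≤ Cc/S := by positivity
    have hsec1 : ((Cc+1)*u - (Cc-1)*w)/(2*S^2) ≤ 2*z*g := by
      rw [div_le_iff₀ (by positivity)]
      have e := L_sec_up hs hg hgS h2 hu hw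
      have hq : 2*z*g*(2*S^2) = 4*g*(z*S^2) := by ring
      rw [hq, hzS2]
      linarith [e]
    have hsec2 : -(2*z*g) ≤ ((Cc+1)*u - (Cc-1)*w)/(2*S^2) := by
      rw [le_div_iff₀ (by positivity)]
      have e := L_sec_lo hs hg hgS h2 hu hw
      have hq : -(2*z*g)*(2*S^2) = -(4*g*(z*S^2)) := by ring
      rw [hq, hzS2]
      linarith [e]
    have hP1 : P ≤ (d:ℝ)*(1+g) + 2*z*g := by
      rw [hPd]
      have := mul_nonneg hd0 hCS0
      have h1g : (0:ℝ) ≤ (d:ℝ)*(1+g) := mul_nonneg hd0 (by linarith)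
      linarith [hsec1]
    have hP2 : -((d:ℝ)*(1+g) + 2*z*g) ≤ P := by
      rw [hPd]
      have := mul_le_mul_of_nonneg_left hCS hd0
      linarith [hsec2]
    exact L_P2 (d:ℝ) hd0 hg hz hP1 hP2
  have k1 : z * Ez^2 ≤ 1 := by rw [hEzd]; exact L_zexp z hz
  have k3 : z^3 * Ez^2 ≤ 4 := by rw [hEzd]; exact L_z3exp z hz
  set M : ℝ := A*P + B with hMd
  clear_value M
  have hM2 : M^2 ≤ 8*(1+g)*(z*P^2 + z*g^2) := by
    rw [hMd]; exact L_M2 A B P z g hg hz hA2 hB2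
  have hM2e : M^2*Ez^2 ≤ 8*(1+g)*(2*(d:ℝ)^2*(1+g)^2 + 33*g^2) :=
    L_assemble z g Ez P M (d:ℝ) hd0 hg hz k1 k3 hPb hM2
  have hMfin : |M| * Ez ≤ (12*(d:ℝ)+96) * (1 + τ) := by
    apply L_sqrt (mul_nonneg (abs_nonneg M) hEz.le) (by positivity)
    have e0 : (|M| * Ez)^2 = M^2*Ez^2 := by rw [mul_pow, sq_abs]
    rw [e0]
    exact L_final (d:ℝ) g τ (M^2*Ez^2) hd0 hg hτ hτ2 hM2e
  have hpu : u/(16*t) ≤ p := by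
    rw [hpd, div_le_div_iff₀ (by positivity) (by positivity)]
    exact L_pu ht h2 h4 hu
  have hEfull : -((Cc+1)*u + (Cc-1)*w)/(4*S) = -p + -z := by
    rw [hzd, hpd, hqd]; field_simp; ring
  rw [hEfull, Real.exp_add, ← hEzd]
  have hexp_p : Real.exp (-p) ≤ Real.exp (-(1/16) * u / t) := by
    apply Real.exp_le_exp.mpr
    have e : -(1/16) * u / t = -(u/(16*t)) := by ring
    rw [e]
    linarith
  calc (|M|) * (Real.exp (-p) * Ez)
      = Real.exp (-p) * ((|M|) * Ez) := by ring
    _ ≤ Real.exp (-(1/16) * u / t) * ((12*(d:ℝ)+96) * (1+τ)) := by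
        apply mul_le_mul hexp_p hMfin (by positivity) (Real.exp_nonneg _)
    _ = (12*(d:ℝ)+96) * (1 + τ) * Real.exp (-(1/16) * u / t) := by ring

lemma coef_bound (d : ℕ) (hd1 : 1 ≤ d) {t : ℝ} (ht : 0 < t) :
    (Real.sinh (2*t)) ^ (-(d:ℝ)/2) * ((12*(d:ℝ)+96) * (1 + t ^ (-(3:ℝ)/2)))
      ≤ (2*(12*(d:ℝ)+96) * 4^d * ((d:ℝ)+2)^(d+2)) * t ^ (-(d:ℝ)/2 - 3/2) := by
  have hd0 : (0:ℝ) ≤ (d:ℝ) := Nat.cast_nonneg d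
  have hpw : -(d:ℝ)/2 ≤ 0 := by linarith
  have hs : 0 < Real.sinh (2*t) := Real.sinh_pos_iff.mpr (by linarith)
  have h1 : 2*t ≤ Real.sinh (2*t) := Real.self_le_sinh_iff.mpr (by linarith)
  have hone4 : (1:ℝ) ≤ 4^d := one_le_pow₀ (by norm_num)
  have honeD : (1:ℝ) ≤ ((d:ℝ)+2)^(d+2) := one_le_pow₀ (by linarith)
  have c0 : (0:ℝ) ≤ 12*(d:ℝ)+96 := by positivity
  rcases le_total t 1 with hle | hge
  · -- small t
    have hsp : Real.sinh (2*t) ^ (-(d:ℝ)/2) ≤ t ^ (-(d:ℝ)/2) :=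
      Real.rpow_le_rpow_of_nonpos ht (by linarith) hpw
    have hτ1 : 1 ≤ t ^ (-(3:ℝ)/2) :=
      Real.one_le_rpow_of_pos_of_le_one_of_nonpos ht hle (by norm_num)
    have hsplit : t ^ (-(d:ℝ)/2) * t ^ (-(3:ℝ)/2) = t ^ (-(d:ℝ)/2 - 3/2) := by
      rw [← Real.rpow_add ht]; congr 1; ring
    have htp : (0:ℝ) ≤ t ^ (-(d:ℝ)/2) := (Real.rpow_pos_of_pos ht _).le
    have hττ : (0:ℝ) ≤ t ^ (-(3:ℝ)/2) := (Real.rpow_pos_of_pos ht _).le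
    calc Real.sinh (2*t) ^ (-(d:ℝ)/2) * ((12*(d:ℝ)+96) * (1 + t ^ (-(3:ℝ)/2)))
        ≤ t ^ (-(d:ℝ)/2) * ((12*(d:ℝ)+96) * (1 + t ^ (-(3:ℝ)/2))) := by
          apply mul_le_mul_of_nonneg_right hsp (by positivity)
      _ ≤ t ^ (-(d:ℝ)/2) * ((12*(d:ℝ)+96) * (2 * t ^ (-(3:ℝ)/2))) := by
          apply mul_le_mul_of_nonneg_left _ htp
          apply mul_le_mul_of_nonneg_left _ c0
          linarith
      _ = (2*(12*(d:ℝ)+96)) * (t ^ (-(d:ℝ)/2) * t ^ (-(3:ℝ)/2)) := by ring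
      _ ≤ (2*(12*(d:ℝ)+96)) * (4^d * ((d:ℝ)+2)^(d+2)) * (t ^ (-(d:ℝ)/2) * t ^ (-(3:ℝ)/2)) := by
          apply mul_le_mul_of_nonneg_right _ (by positivity)
          have hprod : (1:ℝ) ≤ 4^d * ((d:ℝ)+2)^(d+2) := by nlinarith [hone4, honeD]
          nlinarith [mul_le_mul_of_nonneg_left hprod (by positivity : (0:ℝ) ≤ 2*(12*(d:ℝ)+96))]
      _ = (2*(12*(d:ℝ)+96) * 4^d * ((d:ℝ)+2)^(d+2)) * t ^ (-(d:ℝ)/2 - 3/2) := by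
          rw [← hsplit]; ring
  · -- large t
    have hd1' : (1:ℝ) ≤ (d:ℝ) := by exact_mod_cast hd1
    have hexp2 : Real.exp (2*t)/4 ≤ Real.sinh (2*t) := by
      rw [Real.sinh_eq]
      have ha : Real.exp (-(2*t)) ≤ 1 := Real.exp_le_one_iff.mpr (by linarith)
      have hb : (2:ℝ) ≤ Real.exp (2*t) := by linarith [Real.add_one_le_exp (2*t)]
      linarith
    have hsp : Real.sinh (2*t) ^ (-(d:ℝ)/2) ≤ (Real.exp (2*t)/4) ^ (-(d:ℝ)/2) :=
      Real.rpow_le_rpow_of_nonpos (by positivity) hexp2 hpw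
    have e1 : (Real.exp (2*t)/4) ^ (-(d:ℝ)/2) = Real.exp (-(d:ℝ)*t) * 4 ^ ((d:ℝ)/2) := by
      rw [Real.div_rpow (Real.exp_nonneg _) (by norm_num), ← Real.exp_mul,
        show 2*t*(-(d:ℝ)/2) = -(d:ℝ)*t by ring,
        show (-(d:ℝ)/2) = -((d:ℝ)/2) by ring,
        Real.rpow_neg (by norm_num : (0:ℝ) ≤ 4), div_eq_mul_inv, inv_inv]
    have e2 : (4:ℝ) ^ ((d:ℝ)/2) ≤ (4:ℝ)^(d:ℕ) := by
      rw [← Real.rpow_natCast 4 d]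
      exact Real.rpow_le_rpow_of_exponent_le (by norm_num) (by linarith)
    have e3 : Real.exp (-(d:ℝ)*t) ≤ Real.exp (-t) :=
      Real.exp_le_exp.mpr (by nlinarith)
    have hW : 0 < t ^ (-(d:ℝ)/2 - 3/2) := Real.rpow_pos_of_pos ht _
    have e4 : Real.exp (-t) ≤ ((d:ℝ)+2)^(d+2) * t ^ (-(d:ℝ)/2 - 3/2) := by
      have hWmul : t ^ ((d:ℝ)/2 + 3/2) * t ^ (-(d:ℝ)/2 - 3/2) = 1 := by
        rw [← Real.rpow_add ht, show ((d:ℝ)/2+3/2) + (-(d:ℝ)/2 - 3/2) = 0 by ring,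
          Real.rpow_zero]
      have hta : t ^ ((d:ℝ)/2+3/2) ≤ t ^ (((d+2:ℕ)):ℝ) := by
        apply Real.rpow_le_rpow_of_exponent_le hge
        push_cast; linarith
      have htb : t ^ (((d+2:ℕ)):ℝ) = t^(d+2) := Real.rpow_natCast t (d+2)
      have htc : t^(d+2) ≤ ((d:ℝ)+2)^(d+2) * Real.exp t := by
        have hd2 : (0:ℝ) < (d:ℝ)+2 := by positivity
        have h5 : t/((d:ℝ)+2) ≤ Real.exp (t/((d:ℝ)+2)) := by
          linarith [Real.add_one_le_exp (t/((d:ℝ)+2))]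
        have h6 : (t/((d:ℝ)+2))^(d+2) ≤ (Real.exp (t/((d:ℝ)+2)))^(d+2) :=
          pow_le_pow_left₀ (by positivity) h5 _
        have h7 : (Real.exp (t/((d:ℝ)+2)))^(d+2) = Real.exp t := by
          rw [← Real.exp_nat_mul]; congr 1; push_cast; field_simp
        have h8 : (t/((d:ℝ)+2))^(d+2) = t^(d+2)/((d:ℝ)+2)^(d+2) := div_pow t _ (d+2)
        rw [h7, h8, div_le_iff₀ (by positivity)] at h6
        linarith
      have h9 : 1 ≤ ((d:ℝ)+2)^(d+2) * Real.exp t * t ^ (-(d:ℝ)/2 - 3/2) := by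
        calc (1:ℝ) = t ^ ((d:ℝ)/2+3/2) * t ^ (-(d:ℝ)/2 - 3/2) := hWmul.symm
          _ ≤ (((d:ℝ)+2)^(d+2) * Real.exp t) * t ^ (-(d:ℝ)/2-3/2) := by
              apply mul_le_mul_of_nonneg_right _ hW.le
              calc t ^ ((d:ℝ)/2+3/2) ≤ t^(d+2) := htb ▸ hta
                _ ≤ _ := htc
          _ = _ := by ring
      have h10 := mul_le_mul_of_nonneg_right h9 (Real.exp_nonneg (-t))
      rw [one_mul] at h10
      calc Real.exp (-t)
          ≤ ((d:ℝ)+2)^(d+2) * Real.exp t * t ^ (-(d:ℝ)/2-3/2) * Real.exp (-t) := h10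
        _ = ((d:ℝ)+2)^(d+2) * t ^ (-(d:ℝ)/2-3/2) * (Real.exp t * Real.exp (-t)) := by ring
        _ = ((d:ℝ)+2)^(d+2) * t ^ (-(d:ℝ)/2-3/2) := by rw [← Real.exp_add]; simp
    have hτle1 : t ^ (-(3:ℝ)/2) ≤ 1 :=
      Real.rpow_le_one_of_one_le_of_nonpos hge (by norm_num)
    have hττ : (0:ℝ) ≤ t ^ (-(3:ℝ)/2) := (Real.rpow_pos_of_pos ht _).le
    have c1 : (12*(d:ℝ)+96)*(1 + t ^ (-(3:ℝ)/2)) ≤ (12*(d:ℝ)+96)*2 :=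
      mul_le_mul_of_nonneg_left (by linarith) c0
    calc Real.sinh (2*t) ^ (-(d:ℝ)/2) * ((12*(d:ℝ)+96) * (1 + t ^ (-(3:ℝ)/2)))
        ≤ (Real.exp (2*t)/4) ^ (-(d:ℝ)/2) * ((12*(d:ℝ)+96) * (1 + t ^ (-(3:ℝ)/2))) := by
          apply mul_le_mul_of_nonneg_right hsp (by positivity)
      _ = (Real.exp (-(d:ℝ)*t) * 4 ^ ((d:ℝ)/2)) * ((12*(d:ℝ)+96) * (1 + t ^ (-(3:ℝ)/2))) := by
          rw [e1]
      _ ≤ (Real.exp (-(d:ℝ)*t) * 4 ^ ((d:ℝ)/2)) * ((12*(d:ℝ)+96) * 2) := by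
          apply mul_le_mul_of_nonneg_left c1 (by positivity)
      _ ≤ (Real.exp (-t) * (4:ℝ)^(d:ℕ)) * ((12*(d:ℝ)+96) * 2) := by
          apply mul_le_mul_of_nonneg_right _ (by positivity)
          exact mul_le_mul e3 e2 (by positivity) (Real.exp_nonneg _)
      _ ≤ ((((d:ℝ)+2)^(d+2) * t ^ (-(d:ℝ)/2 - 3/2)) * (4:ℝ)^(d:ℕ)) * ((12*(d:ℝ)+96) * 2) := by
          apply mul_le_mul_of_nonneg_right _ (by positivity)
          exact mul_le_mul_of_nonneg_right e4 (by positivity)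
      _ = (2*(12*(d:ℝ)+96) * 4^d * ((d:ℝ)+2)^(d+2)) * t ^ (-(d:ℝ)/2 - 3/2) := by ring

lemma mehler_symm (d : ℕ) (t : ℝ) (x y : Fin d → ℝ) :
    mehlerKer d t x y = mehlerKer d t y x := by
  unfold mehlerKer
  rw [show (∑ j, y j * x j) = ∑ j, x j * y j from
      Finset.sum_congr rfl fun i _ => mul_comm _ _,
    add_comm (∑ j, x j ^ 2) (∑ j, y j ^ 2)]

set_option maxHeartbeats 1000000 in
lemma main_bound (d : ℕ) (hd1 : 1 ≤ d) {t : ℝ} (ht : 0 < t) (x y : Fin d → ℝ) (j : Fin d) :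
    |deriv (fun v => deriv (fun s => mehlerKer d s x (Function.update y j v)) t) (y j)|
      ≤ (2*(12*(d:ℝ)+96) * 4^d * ((d:ℝ)+2)^(d+2)) * t ^ (-(d:ℝ)/2 - 3/2)
        * Real.exp (-(1/16) * (∑ i, (x i - y i)^2) / t) := by
  have hs : 0 < Real.sinh (2*t) := Real.sinh_pos_iff.mpr (by linarith)
  have h1 : 2*t ≤ Real.sinh (2*t) := Real.self_le_sinh_iff.mpr (by linarith)
  have h2 : 1 ≤ Real.cosh (2*t) := Real.one_le_cosh (2*t)
  have h3 : Real.cosh (2*t) ≤ Real.sinh (2*t) + 1 := by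
    have := Real.cosh_sub_sinh (2*t)
    have he : Real.exp (-(2*t)) ≤ 1 := Real.exp_le_one_iff.mpr (by linarith)
    linarith
  have h4 : Real.sinh (2*t) ≤ 2*t*Real.cosh (2*t) := by
    have := sinh_le_mul_cosh (by linarith : (0:ℝ) ≤ 2*t)
    linarith
  set u : ℝ := ∑ i, (x i - y i)^2 with hud
  set w : ℝ := ∑ i, (x i + y i)^2 with hwd
  have hu : 0 ≤ u := Finset.sum_nonneg fun i _ => sq_nonneg _
  have hw : 0 ≤ w := Finset.sum_nonneg fun i _ => sq_nonneg _
  have hX2 : (x j - y j)^2 ≤ u :=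
    Finset.single_le_sum (f := fun i => (x i - y i)^2) (fun i _ => sq_nonneg _)
      (Finset.mem_univ j)
  have hXY2 : (x j + y j)^2 ≤ w :=
    Finset.single_le_sum (f := fun i => (x i + y i)^2) (fun i _ => sq_nonneg _)
      (Finset.mem_univ j)
  have huw : u + w = 2*((∑ i, x i^2) + (∑ i, y i^2)) := by
    rw [hud, hwd, ← Finset.sum_add_distrib]
    rw [show (2:ℝ)*((∑ i, x i^2) + (∑ i, y i^2)) = (∑ i, 2*(x i)^2) + (∑ i, 2*(y i)^2) by
      rw [← Finset.mul_sum, ← Finset.mul_sum]; ring]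
    rw [← Finset.sum_add_distrib]
    exact Finset.sum_congr rfl fun i _ => by ring
  have hIw : w - u = 4*(∑ i, x i * y i) := by
    rw [hud, hwd, ← Finset.sum_sub_distrib, show (4:ℝ)*(∑ i, x i * y i) = ∑ i, 4*(x i * y i) by
      rw [← Finset.mul_sum]]
    exact Finset.sum_congr rfl fun i _ => by ring
  have hQ : (∑ i, x i^2) + (∑ i, y i^2) = (u+w)/2 := by linarith
  have hI : (∑ i, x i * y i) = (w-u)/4 := by linarith
  have hK : mehlerKer d t x y = (Real.sinh (2*t)) ^ (-(d:ℝ)/2) *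
      Real.exp (-((Real.cosh (2*t)+1)*u + (Real.cosh (2*t)-1)*w)/(4*Real.sinh (2*t))) := by
    unfold mehlerKer
    congr 2
    rw [hQ, hI]
    field_simp
    ring
  have hPf : Pf d t x y = -(d:ℝ)*(Real.cosh (2*t)/Real.sinh (2*t)) +
      ((Real.cosh (2*t)+1)*u - (Real.cosh (2*t)-1)*w)/(2*(Real.sinh (2*t))^2) := by
    unfold Pf
    rw [hQ, hI]
    field_simp
    ring
  rw [deriv_deriv_eq d ht x y j, hK, hPf]
  rw [show ((Real.sinh (2*t)) ^ (-(d:ℝ)/2) *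
      Real.exp (-((Real.cosh (2*t)+1)*u + (Real.cosh (2*t)-1)*w)/(4*Real.sinh (2*t)))) *
      ((x j - Real.cosh (2*t) * y j) / Real.sinh (2*t) *
        (-(d:ℝ)*(Real.cosh (2*t)/Real.sinh (2*t)) +
          ((Real.cosh (2*t)+1)*u - (Real.cosh (2*t)-1)*w)/(2*(Real.sinh (2*t))^2)) +
        (2 * y j - 2 * Real.cosh (2*t) * x j) / Real.sinh (2*t) ^ 2)
    = (Real.sinh (2*t)) ^ (-(d:ℝ)/2) *
      (((x j - Real.cosh (2*t) * y j) / Real.sinh (2*t) *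
        (-(d:ℝ)*(Real.cosh (2*t)/Real.sinh (2*t)) +
          ((Real.cosh (2*t)+1)*u - (Real.cosh (2*t)-1)*w)/(2*(Real.sinh (2*t))^2)) +
        (2 * y j - 2 * Real.cosh (2*t) * x j) / Real.sinh (2*t) ^ 2) *
       Real.exp (-((Real.cosh (2*t)+1)*u + (Real.cosh (2*t)-1)*w)/(4*Real.sinh (2*t)))) by ring]
  rw [abs_mul, abs_of_pos (Real.rpow_pos_of_pos hs _), abs_mul,
    abs_of_pos (Real.exp_pos _)]
  have hcore := absM_bound d (u := u) (w := w) (X := x j) (Y := y j) ht h1 h2 h3 h4 hu hw hX2 hXY2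
  calc (Real.sinh (2*t)) ^ (-(d:ℝ)/2) *
        (|(x j - Real.cosh (2*t) * y j) / Real.sinh (2*t) *
          (-(d:ℝ)*(Real.cosh (2*t)/Real.sinh (2*t)) +
            ((Real.cosh (2*t)+1)*u - (Real.cosh (2*t)-1)*w)/(2*(Real.sinh (2*t))^2)) +
          (2 * y j - 2 * Real.cosh (2*t) * x j) / Real.sinh (2*t) ^ 2| *
         Real.exp (-((Real.cosh (2*t)+1)*u + (Real.cosh (2*t)-1)*w)/(4*Real.sinh (2*t))))
      ≤ (Real.sinh (2*t)) ^ (-(d:ℝ)/2) *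
        ((12*(d:ℝ)+96) * (1 + t ^ (-(3:ℝ)/2)) * Real.exp (-(1/16) * u / t)) :=
        mul_le_mul_of_nonneg_left hcore (Real.rpow_pos_of_pos hs _).le
    _ = ((Real.sinh (2*t)) ^ (-(d:ℝ)/2) * ((12*(d:ℝ)+96) * (1 + t ^ (-(3:ℝ)/2)))) *
          Real.exp (-(1/16) * u / t) := by ring
    _ ≤ ((2*(12*(d:ℝ)+96) * 4^d * ((d:ℝ)+2)^(d+2)) * t ^ (-(d:ℝ)/2 - 3/2)) *
          Real.exp (-(1/16) * u / t) :=
        mul_le_mul_of_nonneg_right (coef_bound d hd1 ht) (Real.exp_nonneg _)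
    _ = (2*(12*(d:ℝ)+96) * 4^d * ((d:ℝ)+2)^(d+2)) * t ^ (-(d:ℝ)/2 - 3/2) *
          Real.exp (-(1/16) * u / t) := by ring

theorem mehlerKer_mixed_deriv_bound (d : ℕ) :
    ∃ C > 0, ∃ a > 0, ∀ t > 0, ∀ x y : Fin d → ℝ, ∀ j : Fin d,
      |deriv (fun v => deriv (fun s => mehlerKer d s x (Function.update y j v)) t) (y j)| ≤
          C * t ^ (-(d:ℝ)/2 - 3/2) * Real.exp (-a * (∑ i, (x i - y i)^2) / t) ∧
      |deriv (fun v => deriv (fun s => mehlerKer d s (Function.update x j v) y) t) (x j)| ≤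
          C * t ^ (-(d:ℝ)/2 - 3/2) * Real.exp (-a * (∑ i, (x i - y i)^2) / t) := by
  refine ⟨2*(12*(d:ℝ)+96) * 4^d * ((d:ℝ)+2)^(d+2), by positivity, 1/16, by norm_num,
    fun t ht x y j => ?_⟩
  rcases Nat.eq_zero_or_pos d with hd0 | hd1
  · subst hd0; exact j.elim0
  have hsum : (∑ i, (y i - x i)^2) = ∑ i, (x i - y i)^2 :=
    Finset.sum_congr rfl fun i _ => by ring
  constructor
  · have h := main_bound d hd1 ht x y j
    calc _ ≤ _ := h
      _ = _ := by norm_num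
  · have hswap : (fun v => deriv (fun s => mehlerKer d s (Function.update x j v) y) t)
        = (fun v => deriv (fun s => mehlerKer d s y (Function.update x j v)) t) := by
      funext v
      congr 1
      funext s
      exact mehler_symm d s (Function.update x j v) y
    rw [hswap]
    have h := main_bound d hd1 ht y x j
    rw [hsum] at h
    calc _ ≤ _ := h
      _ = _ := by norm_num
end
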